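/- For real x ≥ 1, ∑_{n : α(n) ≤ x} μ(n)·⌊x/α(n)⌋ equals 1 if 1 ≤ x < 2 and equals 2 if x ≥ 2. -/

import Mathlib

/-!
Write `N = ⌊x⌋`. Since `n ∣ F_m ↔ α(n) ∣ m`, the integer `⌊N / α(n)⌋` counts the `m ≤ N` with
`n ∣ F_m`. Exchanging the order of summation turns the sum into `∑_{m ≤ N} ∑_{d ∣ F_m} μ(d)`,
which by Möbius inversion counts the `m ≤ N` with `F_m = 1`, i.e. `m ∈ {1, 2}`.
-/

open Finset

noncomputable def fibAlpha (n : ℕ) : ℕ := sInf {m | 0 < m ∧ n ∣ Nat.fib m}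

open ArithmeticFunction
open scoped ArithmeticFunction.Moebius

lemma fibAlpha_pos_and_dvd_fib {n : ℕ} (h : fibAlpha n ≠ 0) :
    0 < fibAlpha n ∧ n ∣ Nat.fib (fibAlpha n) := by
  refine Nat.sInf_mem (s := {m | 0 < m ∧ n ∣ Nat.fib m}) ?_
  by_contra hempty
  rw [Set.not_nonempty_iff_eq_empty] at hempty
  simp [fibAlpha, hempty] at h

lemma dvd_fib_iff_fibAlpha_dvd {n : ℕ} (h : fibAlpha n ≠ 0) (m : ℕ) :
    n ∣ Nat.fib m ↔ fibAlpha n ∣ m := by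
  obtain ⟨hpos, hdvd⟩ := fibAlpha_pos_and_dvd_fib h
  refine ⟨fun hm => ?_, fun hm => hdvd.trans (Nat.fib_dvd _ _ hm)⟩
  rcases Nat.eq_zero_or_pos m with rfl | hm0
  · exact dvd_zero _
  have hgcd : n ∣ Nat.fib (m.gcd (fibAlpha n)) := by
    rw [Nat.fib_gcd]
    exact Nat.dvd_gcd hm hdvd
  have hle : fibAlpha n ≤ m.gcd (fibAlpha n) :=
    Nat.sInf_le ⟨Nat.gcd_pos_of_pos_left _ hm0, hgcd⟩
  rw [← le_antisymm (Nat.gcd_le_right _ hpos) hle]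
  exact Nat.gcd_dvd_left _ _

lemma not_dvd_fib_of_fibAlpha_eq_zero {n m : ℕ} (h : fibAlpha n = 0) (hm : 0 < m) :
    ¬ n ∣ Nat.fib m := fun hdvd =>
  (Nat.sInf_mem (s := {m | 0 < m ∧ n ∣ Nat.fib m}) ⟨m, hm, hdvd⟩).1.ne' h

-- This also covers `fibAlpha n = 0`, where both sides vanish since `N / 0 = 0`.
lemma card_filter_dvd_fib_Ioc (n N : ℕ) :
    #{m ∈ Ioc 0 N | n ∣ Nat.fib m} = N / fibAlpha n := by
  by_cases h : fibAlpha n = 0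
  · rw [h, Nat.div_zero, card_eq_zero, filter_eq_empty_iff]
    exact fun m hm => not_dvd_fib_of_fibAlpha_eq_zero h (mem_Ioc.mp hm).1
  · simp_rw [dvd_fib_iff_fibAlpha_dvd h]
    exact Nat.Ioc_filter_dvd_card_eq_div N (fibAlpha n)

lemma sum_divisors_moebius (n : ℕ) : ∑ d ∈ n.divisors, (μ d : ℤ) = if n = 1 then 1 else 0 := by
  rw [← coe_mul_zeta_apply, moebius_mul_coe_zeta, one_apply]

lemma filter_dvd_Icc_eq_divisors {n K : ℕ} (hn : n ≠ 0) (hnK : n ≤ K) :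
    {d ∈ Icc 1 K | d ∣ n} = n.divisors := by
  ext d
  simp only [mem_filter, mem_Icc, Nat.mem_divisors]
  refine ⟨fun ⟨_, hd⟩ => ⟨hd, hn⟩, fun ⟨hd, _⟩ => ⟨⟨?_, ?_⟩, hd⟩⟩
  · exact Nat.pos_of_dvd_of_pos hd (Nat.pos_of_ne_zero hn)
  · exact (Nat.le_of_dvd (Nat.pos_of_ne_zero hn) hd).trans hnK

lemma sum_moebius_mul_card_filter_dvd_fib (N : ℕ) :
    ∑ n ∈ Icc 1 (Nat.fib N), (μ n : ℤ) * #{m ∈ Ioc 0 N | n ∣ Nat.fib m}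
      = #{m ∈ Ioc 0 N | Nat.fib m = 1} := by
  calc ∑ n ∈ Icc 1 (Nat.fib N), (μ n : ℤ) * #{m ∈ Ioc 0 N | n ∣ Nat.fib m}
      = ∑ m ∈ Ioc 0 N, ∑ n ∈ Icc 1 (Nat.fib N) with n ∣ Nat.fib m, (μ n : ℤ) := by
        simp_rw [sum_filter, sum_comm (s := Ioc 0 N), ← sum_filter, sum_const, nsmul_eq_mul,
          mul_comm]
    _ = ∑ m ∈ Ioc 0 N, if Nat.fib m = 1 then 1 else 0 := by
        refine sum_congr rfl fun m hm => ?_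
        obtain ⟨hm0, hmN⟩ := mem_Ioc.mp hm
        rw [filter_dvd_Icc_eq_divisors (Nat.fib_pos.mpr hm0).ne' (Nat.fib_mono hmN),
          sum_divisors_moebius]
    _ = #{m ∈ Ioc 0 N | Nat.fib m = 1} := by
        rw [sum_boole]

lemma fib_eq_one_iff {m : ℕ} (hm : 0 < m) : Nat.fib m = 1 ↔ m = 1 ∨ m = 2 := by
  refine ⟨fun h => ?_, by rintro (rfl | rfl) <;> rfl⟩
  by_contra! hm12
  have : Nat.fib 3 ≤ Nat.fib m := Nat.fib_mono (by omega)
  simp [Nat.fib_add_two, h] at this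

lemma card_filter_fib_eq_one_Ioc (N : ℕ) : #{m ∈ Ioc 0 N | Nat.fib m = 1} = min N 2 := by
  have : {m ∈ Ioc 0 N | Nat.fib m = 1} = Ioc 0 (min N 2) := by
    ext m
    simp only [mem_filter, mem_Ioc]
    constructor
    · rintro ⟨⟨hm0, hmN⟩, hfib⟩
      have := (fib_eq_one_iff hm0).mp hfib
      omega
    · rintro ⟨hm0, hm⟩
      exact ⟨⟨hm0, by omega⟩, (fib_eq_one_iff hm0).mpr (by omega)⟩
  rw [this, Nat.card_Ioc, Nat.sub_zero]

theorem moebius_sum_alpha_floor (x : ℝ) (hx : 1 ≤ x) :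
    ∑ n ∈ (Icc 1 (Nat.fib ⌊x⌋₊)).filter (fun n => fibAlpha n ≤ ⌊x⌋₊),
        (ArithmeticFunction.moebius n : ℤ) * (⌊x⌋₊ / fibAlpha n : ℕ)
      = if x < 2 then 1 else 2 := by
  set N := ⌊x⌋₊
  have hN : 1 ≤ N := Nat.le_floor (by exact_mod_cast hx)
  have hdrop_filter : ∀ n ∈ Icc 1 (Nat.fib N), ¬ fibAlpha n ≤ N →
      (μ n : ℤ) * (N / fibAlpha n : ℕ) = 0 := fun n _ hn => by
    rw [Nat.div_eq_of_lt (not_le.mp hn), Nat.cast_zero, mul_zero]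
  rw [sum_filter_of_ne fun n hn h => not_imp_comm.mp (hdrop_filter n hn) h]
  simp_rw [← card_filter_dvd_fib_Ioc]
  rw [sum_moebius_mul_card_filter_dvd_fib, card_filter_fib_eq_one_Ioc]
  split_ifs with hx2
  · have : N < 2 := (Nat.floor_lt (by linarith)).mpr hx2
    rw [min_eq_left (by omega)]
    exact_mod_cast (by omega : N = 1)
  · have : 2 ≤ N := Nat.le_floor (by push_cast; linarith)
    rw [min_eq_right this]
    rfl
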